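/- Let d ≥ 2 and let u_1, …, u_n ∈ ℝ^d be vectors such that u_1, …, u_{n−1} span ℝ^d and u_n = (0,0,…,0,1). Let Ω_n and Ω_{n−1} be the origin-symmetric zonotopes generated by u_1,…,u_n and by u_1,…,u_{n−1}, respectively. Then there exists a cylindric set Σ_n ⊂ Ω_n whose base is the image Π_n of Ω_{n−1} under the projection (x,y) ↦ x, such that: (i) every f ∈ L²(ℝ^d) vanishing almost everywhere outside Ω_n can be written as f(x,y) = g(x,y) + (h(x, y+1/2) − h(x, y−1/2))/(2i) for almost every (x,y) ∈ ℝ^{d−1} × ℝ, where g ∈ L²(ℝ^d) vanishes a.e. outside Σ_n and h ∈ L²(ℝ^d) vanishes a.e. outside Ω_{n−1}; and (ii) conversely, for any g, h ∈ L²(ℝ^d) vanishing a.e. outside Σ_n and outside Ω_{n−1} respectively, the function f defined by this formula vanishes a.e. outside Ω_n. -/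

import Mathlib

/-!
Let `K = Ω_{n-1}`. Being compact and convex, `K` is the closed region between the graphs of its
lower and upper fiber boundaries `a ≤ b` over its shadow `Π`; since `u_n = (0, 1)`,
`Ω_n = K + {0} × [-1/2, 1/2]` is the region between `a - 1/2` and `b + 1/2`, and `Σ_n` is taken to
be the slab between `a - 1/2` and `a + 1/2`.

For `f` supported in `Ω_n`, the discrete primitive `H(x, y) = -∑_{k=0}^{N} f(x, y + 1/2 + k)` for
`y > a(x)` (and `0` otherwise) vanishes outside `K`. Above the slab the difference
`H(x, y + 1/2) - H(x, y - 1/2)` telescopes to `f(x, y)` as soon as `N ≥ b - a`, and below it both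
sides vanish, so `g = f - (H(·, · + 1/2) - H(·, · - 1/2))` is supported in `Σ_n` and `h = 2iH`.
The converse is support bookkeeping, vertical translations being measure preserving.
-/

open MeasureTheory Complex
open scoped RealInnerProductSpace Pointwise

noncomputable section

/-- The origin-symmetric zonotope generated by the vectors `u 1, …, u n`. -/
def zonotope {V : Type*} [AddCommGroup V] [Module ℝ V] {n : ℕ} (u : Fin n → V) : Set V :=
  {x | ∃ t : Fin n → ℝ, (∀ j, t j ∈ Set.Icc (-(1/2) : ℝ) (1/2)) ∧ x = ∑ j, t j • u j}

/-- A cylindric set `S ⊆ ℝ^{m} × ℝ` with base `B ⊆ ℝ^{m}`: over every point of the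
bounded measurable base `B`, the fiber of `S` is an interval `[φ x, φ x + 1]` of length one,
where `φ` is a bounded measurable function on `B`. -/
def IsCylindric {m : ℕ} (S : Set (EuclideanSpace ℝ (Fin m) × ℝ))
    (B : Set (EuclideanSpace ℝ (Fin m))) : Prop :=
  Bornology.IsBounded S ∧ MeasurableSet S ∧ Bornology.IsBounded B ∧ MeasurableSet B ∧
    ∃ φ : EuclideanSpace ℝ (Fin m) → ℝ, Measurable φ ∧ (∃ C : ℝ, ∀ x ∈ B, |φ x| ≤ C) ∧
      S = {p | p.1 ∈ B ∧ φ p.1 ≤ p.2 ∧ p.2 ≤ φ p.1 + 1}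

open Set
open scoped ENNReal

section Zonotope

variable {V : Type*} [AddCommGroup V] [Module ℝ V]

lemma zonotope_eq_image {n : ℕ} (u : Fin n → V) :
    zonotope u = Fintype.linearCombination ℝ u '' univ.pi fun _ => Icc (-(1/2)) (1/2) := by
  ext x
  simp only [zonotope, Fintype.linearCombination_apply, mem_ofPred_eq, mem_image, mem_univ_pi]
  exact ⟨fun ⟨t, ht, hx⟩ => ⟨t, ht, hx.symm⟩, fun ⟨t, ht, hx⟩ => ⟨t, ht, hx.symm⟩⟩

lemma convex_zonotope {n : ℕ} (u : Fin n → V) : Convex ℝ (zonotope u) := by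
  rw [zonotope_eq_image]
  exact (convex_pi fun _ _ => convex_Icc _ _).linear_image _

lemma isCompact_zonotope [TopologicalSpace V] [IsTopologicalAddGroup V] [ContinuousSMul ℝ V]
    {n : ℕ} (u : Fin n → V) : IsCompact (zonotope u) := by
  rw [zonotope_eq_image]
  refine (isCompact_univ_pi fun _ => isCompact_Icc).image ?_
  rw [show ⇑(Fintype.linearCombination ℝ u) = fun t => ∑ j, t j • u j from
    funext (Fintype.linearCombination_apply ℝ u)]
  fun_prop

lemma mem_zonotope_succ_iff {n : ℕ} (u : Fin (n + 1) → V) {p : V} :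
    p ∈ zonotope u ↔ ∃ q ∈ zonotope (fun j : Fin n => u j.castSucc),
      ∃ t ∈ Icc (-(1/2) : ℝ) (1/2), p = q + t • u (Fin.last n) := by
  constructor
  · rintro ⟨t, ht, rfl⟩
    exact ⟨_, ⟨fun j => t j.castSucc, fun j => ht _, rfl⟩, t (Fin.last n), ht _,
      Fin.sum_univ_castSucc _⟩
  · rintro ⟨q, ⟨s, hs, rfl⟩, t, ht, rfl⟩
    refine ⟨Fin.snoc s t, Fin.lastCases (by simpa using ht) (by simpa using hs), ?_⟩
    simp [Fin.sum_univ_castSucc]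

end Zonotope

section ClosedRegionBetween

variable {α : Type*}

def closedRegionBetween (f g : α → ℝ) (s : Set α) : Set (α × ℝ) :=
  {p | p.1 ∈ s ∧ p.2 ∈ Icc (f p.1) (g p.1)}

variable {f g : α → ℝ} {s : Set α}

@[simp]
lemma mem_closedRegionBetween {p : α × ℝ} :
    p ∈ closedRegionBetween f g s ↔ p.1 ∈ s ∧ f p.1 ≤ p.2 ∧ p.2 ≤ g p.1 :=
  Iff.rfl

lemma closedRegionBetween_mono_right {g' : α → ℝ} (h : ∀ x ∈ s, g x ≤ g' x) :
    closedRegionBetween f g s ⊆ closedRegionBetween f g' s :=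
  fun _ ⟨hx, h₁, h₂⟩ => ⟨hx, h₁, h₂.trans (h _ hx)⟩

lemma mem_closedRegionBetween_thicken_iff (hfg : ∀ x ∈ s, f x ≤ g x) {p : α × ℝ} :
    (∃ q ∈ closedRegionBetween f g s, ∃ t ∈ Icc (-(1/2) : ℝ) (1/2), p = (q.1, q.2 + t)) ↔
      p ∈ closedRegionBetween (fun x => f x - 1/2) (fun x => g x + 1/2) s := by
  constructor
  · rintro ⟨q, ⟨hq, hq₁, hq₂⟩, t, ⟨ht₁, ht₂⟩, rfl⟩
    exact ⟨hq, by dsimp only; linarith, by dsimp only; linarith⟩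
  · rintro ⟨hp, hp₁, hp₂⟩
    obtain ⟨x, y⟩ := p
    dsimp only at hp hp₁ hp₂
    rcases lt_or_ge y (f x) with hy | hy
    · exact ⟨(x, f x), ⟨hp, le_rfl, hfg x hp⟩, y - f x, ⟨by linarith, by linarith⟩, by simp⟩
    rcases le_or_gt y (g x) with hy' | hy'
    · exact ⟨(x, y), ⟨hp, hy, hy'⟩, 0, by norm_num, by simp⟩
    · exact ⟨(x, g x), ⟨hp, hfg x hp, le_rfl⟩, y - g x, ⟨by linarith, by linarith⟩, by simp⟩

end ClosedRegionBetween

section Fibers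

variable {E : Type*} {K : Set (E × ℝ)}

lemma Convex.ordConnected_preimage_prodMk [AddCommGroup E] [Module ℝ E] (hK : Convex ℝ K)
    (x : E) : (Prod.mk x ⁻¹' K).OrdConnected := by
  refine convex_iff_ordConnected.mp fun y hy z hz s t hs ht hst => ?_
  simpa [Prod.smul_mk, ← add_smul, hst] using hK hy hz hs ht hst

variable [TopologicalSpace E] [T2Space E]

lemma IsCompact.preimage_prodMk (hK : IsCompact K) (x : E) : IsCompact (Prod.mk x ⁻¹' K) :=
  (hK.image continuous_snd).of_isClosed_subset (hK.isClosed.preimage (Continuous.prodMk_right x))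
    fun y hy => ⟨(x, y), hy, rfl⟩

lemma IsCompact.mk_sInf_preimage_prodMk_mem (hK : IsCompact K) {x : E} (hx : x ∈ Prod.fst '' K) :
    (x, sInf (Prod.mk x ⁻¹' K)) ∈ K := by
  obtain ⟨p, hp, rfl⟩ := hx
  exact (hK.preimage_prodMk p.1).sInf_mem ⟨p.2, hp⟩

lemma IsCompact.mk_sSup_preimage_prodMk_mem (hK : IsCompact K) {x : E} (hx : x ∈ Prod.fst '' K) :
    (x, sSup (Prod.mk x ⁻¹' K)) ∈ K := by
  obtain ⟨p, hp, rfl⟩ := hx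
  exact (hK.preimage_prodMk p.1).sSup_mem ⟨p.2, hp⟩

lemma IsCompact.eq_closedRegionBetween (hK : IsCompact K)
    (hconn : ∀ x, (Prod.mk x ⁻¹' K).OrdConnected) :
    K = closedRegionBetween (fun x => sInf (Prod.mk x ⁻¹' K)) (fun x => sSup (Prod.mk x ⁻¹' K))
      (Prod.fst '' K) := by
  ext ⟨x, y⟩
  refine ⟨fun hp => ⟨⟨_, hp, rfl⟩, csInf_le (hK.preimage_prodMk x).bddBelow hp,
    le_csSup (hK.preimage_prodMk x).bddAbove hp⟩, fun ⟨hx, hy⟩ => ?_⟩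
  exact (hconn x).out (hK.mk_sInf_preimage_prodMk_mem hx) (hK.mk_sSup_preimage_prodMk_mem hx) hy

lemma IsCompact.measurable_sInf_preimage_prodMk [MeasurableSpace E] [OpensMeasurableSpace E]
    (hK : IsCompact K) : Measurable fun x => sInf (Prod.mk x ⁻¹' K) := by
  refine measurable_of_Iic fun c => ?_
  -- off the shadow `Prod.fst '' K` the fiber is empty and its infimum is the junk value `0`
  have hsub : (fun x => sInf (Prod.mk x ⁻¹' K)) ⁻¹' Iic c =
      Prod.fst '' (K ∩ Prod.snd ⁻¹' Iic c) ∪ (Prod.fst '' K)ᶜ ∩ {_x | 0 ≤ c} := by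
    ext x
    by_cases hx : x ∈ Prod.fst '' K
    · simp only [mem_preimage, mem_Iic, mem_union, mem_inter_iff, mem_compl_iff, hx,
        not_true_eq_false, false_and, or_false]
      refine ⟨fun h => ⟨_, ⟨hK.mk_sInf_preimage_prodMk_mem hx, h⟩, rfl⟩, ?_⟩
      rintro ⟨p, ⟨hp, hpc⟩, rfl⟩
      exact (csInf_le (hK.preimage_prodMk p.1).bddBelow hp).trans hpc
    · have hempty : Prod.mk x ⁻¹' K = ∅ :=
        eq_empty_of_forall_notMem fun y hy => hx ⟨(x, y), hy, rfl⟩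
      simp only [mem_preimage, hempty, Real.sInf_empty, mem_Iic, mem_union, mem_inter_iff,
        mem_compl_iff, hx, not_false_eq_true, true_and, mem_ofPred_eq]
      exact ⟨Or.inr, fun h => h.resolve_left fun ⟨p, ⟨hp, _⟩, hpx⟩ => hx ⟨p, hp, hpx⟩⟩
  rw [hsub]
  exact ((hK.inter_right (isClosed_Iic.preimage continuous_snd)).image
    continuous_fst).isClosed.measurableSet.union
      ((hK.image continuous_fst).isClosed.measurableSet.compl.inter (MeasurableSet.const _))

end Fibers

section DiscretePrimitive

variable {E : Type*}

lemma measurePreserving_add_snd [MeasurableSpace E] {μ : Measure E} [SFinite μ] (c : ℝ) :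
    MeasurePreserving (fun p : E × ℝ => (p.1, p.2 + c)) (μ.prod volume) (μ.prod volume) :=
  (MeasurePreserving.id μ).prod (measurePreserving_add_right volume c)

lemma measurePreserving_sub_snd [MeasurableSpace E] {μ : Measure E} [SFinite μ] (c : ℝ) :
    MeasurePreserving (fun p : E × ℝ => (p.1, p.2 - c)) (μ.prod volume) (μ.prod volume) :=
  (MeasurePreserving.id μ).prod (measurePreserving_sub_right volume c)

variable (a : E → ℝ) (N : ℕ) (f : E × ℝ → ℂ)

def discretePrimitive : E × ℝ → ℂ :=
  {p : E × ℝ | a p.1 < p.2}.indicator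
    fun p => -∑ k ∈ Finset.range (N + 1), f (p.1, p.2 + (k + 1/2))

variable {a N f}

lemma discretePrimitive_of_le {p : E × ℝ} (hp : p.2 ≤ a p.1) : discretePrimitive a N f p = 0 :=
  indicator_of_notMem (s := {p : E × ℝ | a p.1 < p.2}) (not_lt.2 hp) _

lemma discretePrimitive_sub_of_lt {x : E} {y : ℝ} (hy : a x + 1/2 < y) :
    discretePrimitive a N f (x, y + 1/2) - discretePrimitive a N f (x, y - 1/2) =
      f (x, y) - f (x, y + (N + 1)) := by
  have hmem : ∀ c : ℝ, -(1/2) ≤ c → (x, y + c) ∈ {p : E × ℝ | a p.1 < p.2} :=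
    fun c hc => show a x < y + c by linarith
  rw [discretePrimitive, indicator_of_mem (hmem _ (by norm_num)),
    sub_eq_add_neg y, indicator_of_mem (hmem _ le_rfl)]
  have hup : ∑ k ∈ Finset.range (N + 1), f (x, y + 1/2 + (k + 1/2)) =
      ∑ k ∈ Finset.range (N + 1), f (x, y + (k + 1 : ℕ)) :=
    Finset.sum_congr rfl fun k _ => congrArg (fun t => f (x, t)) (by push_cast; ring)
  have hdown : ∑ k ∈ Finset.range (N + 1), f (x, y + -(1/2) + (k + 1/2)) =
      ∑ k ∈ Finset.range (N + 1), f (x, y + k) :=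
    Finset.sum_congr rfl fun k _ => congrArg (fun t => f (x, t)) (by ring)
  rw [hup, hdown, neg_sub_neg, ← Finset.sum_sub_distrib,
    Finset.sum_range_sub' (fun k : ℕ => f (x, y + k))]
  simp

lemma memLp_discretePrimitive [MeasurableSpace E] {μ : Measure E} [SFinite μ] {q : ℝ≥0∞}
    (ha : Measurable a) (hf : MemLp f q (μ.prod volume)) :
    MemLp (discretePrimitive a N f) q (μ.prod volume) :=
  ((memLp_finsetSum _ fun _ _ =>
    hf.comp_measurePreserving (measurePreserving_add_snd _)).neg).indicator
      (measurableSet_lt (ha.comp measurable_fst) measurable_snd)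

end DiscretePrimitive

section Decomposition

variable {E : Type*} {s : Set E} {a b : E → ℝ} {N : ℕ} {f : E × ℝ → ℂ}

lemma discretePrimitive_eq_zero_of_notMem
    (hf : ∀ p ∉ closedRegionBetween (fun x => a x - 1/2) (fun x => b x + 1/2) s, f p = 0)
    {p : E × ℝ} (hp : p ∉ closedRegionBetween a b s) : discretePrimitive a N f p = 0 := by
  rcases le_or_gt p.2 (a p.1) with hpa | hpa
  · exact discretePrimitive_of_le hpa
  rw [discretePrimitive, indicator_of_mem (show p ∈ {p : E × ℝ | a p.1 < p.2} from hpa),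
    neg_eq_zero]
  refine Finset.sum_eq_zero fun k _ => hf _ fun ⟨hx, _, hk⟩ => hp ⟨hx, hpa.le, ?_⟩
  have : (0 : ℝ) ≤ k := k.cast_nonneg
  dsimp only at hk
  linarith

lemma eq_discretePrimitive_sub_of_notMem
    (hf : ∀ p ∉ closedRegionBetween (fun x => a x - 1/2) (fun x => b x + 1/2) s, f p = 0)
    (hN : ∀ x ∈ s, b x - a x ≤ N) {p : E × ℝ}
    (hp : p ∉ closedRegionBetween (fun x => a x - 1/2) (fun x => a x + 1/2) s) :
    f p = discretePrimitive a N f (p.1, p.2 + 1/2) - discretePrimitive a N f (p.1, p.2 - 1/2) := by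
  obtain ⟨x, y⟩ := p
  by_cases hx : x ∈ s
  swap
  · have hK : ∀ y', (x, y') ∉ closedRegionBetween a b s := fun _ h => hx h.1
    rw [hf _ fun h => hx h.1, discretePrimitive_eq_zero_of_notMem hf (hK _),
      discretePrimitive_eq_zero_of_notMem hf (hK _), sub_zero]
  simp only [mem_closedRegionBetween, hx, true_and, not_and_or, not_le] at hp
  rcases hp with hy | hy
  · rw [hf _ fun h => (not_le.2 hy) h.2.1, discretePrimitive_of_le (by dsimp only; linarith),
      discretePrimitive_of_le (by dsimp only; linarith), sub_zero]
  · rw [discretePrimitive_sub_of_lt hy, hf (x, y + (N + 1)), sub_zero]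
    exact fun h => by linarith [h.2.2, hN x hx]

variable [MeasurableSpace E] {μ : Measure E} [SFinite μ]

theorem exists_decomposition_of_closedRegionBetween {q : ℝ≥0∞} (ha : Measurable a) {C : ℝ}
    (hC : ∀ x ∈ s, b x - a x ≤ C)
    (hΩ : MeasurableSet (closedRegionBetween (fun x => a x - 1/2) (fun x => b x + 1/2) s))
    (hf : MemLp f q (μ.prod volume))
    (hf0 : ∀ᵐ p ∂μ.prod volume,
      p ∉ closedRegionBetween (fun x => a x - 1/2) (fun x => b x + 1/2) s → f p = 0) :
    ∃ g h : E × ℝ → ℂ, MemLp g q (μ.prod volume) ∧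
      (∀ p ∉ closedRegionBetween (fun x => a x - 1/2) (fun x => a x + 1/2) s, g p = 0) ∧
      MemLp h q (μ.prod volume) ∧ (∀ p ∉ closedRegionBetween a b s, h p = 0) ∧
      ∀ᵐ p ∂μ.prod volume, f p = g p + (h (p.1, p.2 + 1/2) - h (p.1, p.2 - 1/2)) / (2 * I) := by
  set f' := (closedRegionBetween (fun x => a x - 1/2) (fun x => b x + 1/2) s).indicator f
  have hf' : ∀ p ∉ closedRegionBetween (fun x => a x - 1/2) (fun x => b x + 1/2) s, f' p = 0 :=
    fun _ hp => indicator_of_notMem hp f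
  have hff' : f =ᵐ[μ.prod volume] f' := by
    filter_upwards [hf0] with p hp
    by_cases hpΩ : p ∈ closedRegionBetween (fun x => a x - 1/2) (fun x => b x + 1/2) s
    · exact (indicator_of_mem hpΩ f).symm
    · rw [hp hpΩ, hf' p hpΩ]
  set H := discretePrimitive a ⌈C⌉₊ f'
  have hH : MemLp H q (μ.prod volume) := memLp_discretePrimitive ha (hf.indicator hΩ)
  refine ⟨fun p => f' p - (H (p.1, p.2 + 1/2) - H (p.1, p.2 - 1/2)), fun p => 2 * I * H p,
    (hf.indicator hΩ).sub ((hH.comp_measurePreserving (measurePreserving_add_snd _)).sub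
      (hH.comp_measurePreserving (measurePreserving_sub_snd _))),
    fun p hp => sub_eq_zero.2 (eq_discretePrimitive_sub_of_notMem hf'
      (fun x hx => (hC x hx).trans (Nat.le_ceil C)) hp),
    hH.const_mul _, fun p hp => mul_eq_zero_of_right _ (discretePrimitive_eq_zero_of_notMem hf' hp),
    ?_⟩
  filter_upwards [hff'] with p hp
  rw [hp, ← mul_sub, mul_div_cancel_left₀ _ (mul_ne_zero two_ne_zero I_ne_zero), sub_add_cancel]

theorem ae_eq_zero_of_notMem_closedRegionBetween (hab : ∀ x ∈ s, a x ≤ b x) {g h : E × ℝ → ℂ}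
    (hg : ∀ᵐ p ∂μ.prod volume,
      p ∉ closedRegionBetween (fun x => a x - 1/2) (fun x => a x + 1/2) s → g p = 0)
    (hh : ∀ᵐ p ∂μ.prod volume, p ∉ closedRegionBetween a b s → h p = 0) :
    ∀ᵐ p ∂μ.prod volume, p ∉ closedRegionBetween (fun x => a x - 1/2) (fun x => b x + 1/2) s →
      g p + (h (p.1, p.2 + 1/2) - h (p.1, p.2 - 1/2)) / (2 * I) = 0 := by
  filter_upwards [hg, (measurePreserving_add_snd (1/2)).quasiMeasurePreserving.ae hh,
    (measurePreserving_sub_snd (1/2)).quasiMeasurePreserving.ae hh] with p hpg hup hdown hpΩ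
  rw [hpg fun hpS => hpΩ (closedRegionBetween_mono_right (by simpa using hab) hpS),
    hup fun ⟨hx, h₁, h₂⟩ => hpΩ ⟨hx, by dsimp only at *; linarith, by dsimp only at *; linarith⟩,
    hdown fun ⟨hx, h₁, h₂⟩ => hpΩ ⟨hx, by dsimp only at *; linarith, by dsimp only at *; linarith⟩]
  simp

end Decomposition

lemma isCylindric_closedRegionBetween {m : ℕ} {B : Set (EuclideanSpace ℝ (Fin m))}
    (hBb : Bornology.IsBounded B) (hBm : MeasurableSet B) {a : EuclideanSpace ℝ (Fin m) → ℝ}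
    (ha : Measurable a) {C : ℝ} (hC : ∀ x ∈ B, |a x| ≤ C) :
    IsCylindric (closedRegionBetween (fun x => a x - 1/2) (fun x => a x + 1/2) B) B := by
  refine ⟨(hBb.prod (Metric.isBounded_Icc (-C - 1/2) (C + 1/2))).subset ?_,
    measurableSet_region_between_cc (ha.sub_const _) (ha.add_const _) hBm, hBb, hBm,
    fun x => a x - 1/2, ha.sub_const _, ⟨C + 1/2, fun x hx => ?_⟩, ?_⟩
  · rintro p ⟨hx, h₁, h₂⟩
    have := abs_le.1 (hC _ hx)
    exact ⟨hx, by linarith, by linarith⟩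
  · have := abs_le.1 (hC x hx)
    exact abs_le.2 ⟨by linarith, by linarith⟩
  · ext p
    simp only [mem_closedRegionBetween, mem_ofPred_eq]
    ring_nf

theorem decomposition_L2_zonotope_general
    (m n : ℕ) (u : Fin (n + 1) → EuclideanSpace ℝ (Fin m) × ℝ)
    (hlast : u (Fin.last n) = (0, 1)) :
    ∃ S : Set (EuclideanSpace ℝ (Fin m) × ℝ),
      S ⊆ zonotope u ∧
      IsCylindric S (Prod.fst '' zonotope (fun j : Fin n => u j.castSucc)) ∧
      (∀ f : EuclideanSpace ℝ (Fin m) × ℝ → ℂ, MemLp f 2 volume →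
        (∀ᵐ p : EuclideanSpace ℝ (Fin m) × ℝ ∂volume, p ∉ zonotope u → f p = 0) →
        ∃ g h : EuclideanSpace ℝ (Fin m) × ℝ → ℂ,
          MemLp g 2 volume ∧ (∀ᵐ p : EuclideanSpace ℝ (Fin m) × ℝ ∂volume, p ∉ S → g p = 0) ∧
          MemLp h 2 volume ∧
          (∀ᵐ p : EuclideanSpace ℝ (Fin m) × ℝ ∂volume,
            p ∉ zonotope (fun j : Fin n => u j.castSucc) → h p = 0) ∧
          (∀ᵐ p : EuclideanSpace ℝ (Fin m) × ℝ ∂volume,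
            f p = g p + (h (p.1, p.2 + 1/2) - h (p.1, p.2 - 1/2)) / (2 * Complex.I))) ∧
      (∀ g h : EuclideanSpace ℝ (Fin m) × ℝ → ℂ, MemLp g 2 volume →
        (∀ᵐ p : EuclideanSpace ℝ (Fin m) × ℝ ∂volume, p ∉ S → g p = 0) →
        MemLp h 2 volume →
        (∀ᵐ p : EuclideanSpace ℝ (Fin m) × ℝ ∂volume,
          p ∉ zonotope (fun j : Fin n => u j.castSucc) → h p = 0) →
        ∀ᵐ p : EuclideanSpace ℝ (Fin m) × ℝ ∂volume, p ∉ zonotope u →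
          g p + (h (p.1, p.2 + 1/2) - h (p.1, p.2 - 1/2)) / (2 * Complex.I) = 0) := by
  set K := zonotope fun j : Fin n => u j.castSucc
  have hKc : IsCompact K := isCompact_zonotope _
  have hK := hKc.eq_closedRegionBetween (convex_zonotope _).ordConnected_preimage_prodMk
  set a := fun x => sInf (Prod.mk x ⁻¹' K)
  set b := fun x => sSup (Prod.mk x ⁻¹' K)
  set B := Prod.fst '' K
  have ha : Measurable a := hKc.measurable_sInf_preimage_prodMk
  have haK : ∀ x ∈ B, (x, a x) ∈ K := fun x hx => hKc.mk_sInf_preimage_prodMk_mem hx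
  have hbK : ∀ x ∈ B, (x, b x) ∈ K := fun x hx => hKc.mk_sSup_preimage_prodMk_mem hx
  have hab : ∀ x ∈ B, a x ≤ b x := fun x hx => (hK ▸ haK x hx).2.2
  have hΩ : zonotope u = closedRegionBetween (fun x => a x - 1/2) (fun x => b x + 1/2) B := by
    ext p
    rw [mem_zonotope_succ_iff, hlast, ← mem_closedRegionBetween_thicken_iff hab, ← hK]
    simp [K, Prod.ext_iff]
  obtain ⟨C, hC⟩ := hKc.exists_bound_of_continuousOn continuous_snd.continuousOn
  refine ⟨closedRegionBetween (fun x => a x - 1/2) (fun x => a x + 1/2) B,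
    hΩ ▸ closedRegionBetween_mono_right fun x hx => by simpa using hab x hx,
    isCylindric_closedRegionBetween (hKc.image continuous_fst).isBounded
      (hKc.image continuous_fst).isClosed.measurableSet ha fun x hx => hC _ (haK x hx),
    fun f hf hf0 => ?_,
    fun g h _ hg _ hh => hΩ ▸ ae_eq_zero_of_notMem_closedRegionBetween hab hg (hK ▸ hh)⟩
  obtain ⟨g, h, hg, hgS, hh, hhK, hfgh⟩ :=
    exists_decomposition_of_closedRegionBetween ha (C := 2 * C)
    (fun x hx => by linarith [abs_le.1 (hC _ (haK x hx)), abs_le.1 (hC _ (hbK x hx))])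
    (hΩ ▸ (isCompact_zonotope u).isClosed.measurableSet) hf (hΩ ▸ hf0)
  exact ⟨g, h, hg, .of_forall hgS, hh, .of_forall fun p hp => hhK p (hK ▸ hp), hfgh⟩

theorem decomposition_L2_zonotope
    (m n : ℕ) (hm : 1 ≤ m) (u : Fin (n + 1) → EuclideanSpace ℝ (Fin m) × ℝ)
    (hspan : Submodule.span ℝ (Set.range (fun j : Fin n => u j.castSucc)) = ⊤)
    (hlast : u (Fin.last n) = (0, 1)) :
    ∃ S : Set (EuclideanSpace ℝ (Fin m) × ℝ),
      S ⊆ zonotope u ∧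
      IsCylindric S (Prod.fst '' zonotope (fun j : Fin n => u j.castSucc)) ∧
      (∀ f : EuclideanSpace ℝ (Fin m) × ℝ → ℂ, MemLp f 2 volume →
        (∀ᵐ p : EuclideanSpace ℝ (Fin m) × ℝ ∂volume, p ∉ zonotope u → f p = 0) →
        ∃ g h : EuclideanSpace ℝ (Fin m) × ℝ → ℂ,
          MemLp g 2 volume ∧ (∀ᵐ p : EuclideanSpace ℝ (Fin m) × ℝ ∂volume, p ∉ S → g p = 0) ∧
          MemLp h 2 volume ∧
          (∀ᵐ p : EuclideanSpace ℝ (Fin m) × ℝ ∂volume,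
            p ∉ zonotope (fun j : Fin n => u j.castSucc) → h p = 0) ∧
          (∀ᵐ p : EuclideanSpace ℝ (Fin m) × ℝ ∂volume,
            f p = g p + (h (p.1, p.2 + 1/2) - h (p.1, p.2 - 1/2)) / (2 * Complex.I))) ∧
      (∀ g h : EuclideanSpace ℝ (Fin m) × ℝ → ℂ, MemLp g 2 volume →
        (∀ᵐ p : EuclideanSpace ℝ (Fin m) × ℝ ∂volume, p ∉ S → g p = 0) →
        MemLp h 2 volume →
        (∀ᵐ p : EuclideanSpace ℝ (Fin m) × ℝ ∂volume,
          p ∉ zonotope (fun j : Fin n => u j.castSucc) → h p = 0) →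
        ∀ᵐ p : EuclideanSpace ℝ (Fin m) × ℝ ∂volume, p ∉ zonotope u →
          g p + (h (p.1, p.2 + 1/2) - h (p.1, p.2 - 1/2)) / (2 * Complex.I) = 0) :=
  decomposition_L2_zonotope_general m n u hlast
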